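/- Let Θ = diag(θ₁,…,θ_r) with each θ_i ∈ [0, π/2]. Then ‖Θ − 2 sin(Θ/2)‖_F ≤ ‖sin Θ‖_F², where sin acts entrywise on the diagonal and the Frobenius norm of a diagonal matrix is the ℓ₂ norm of its diagonal. -/

import Mathlib

/-!
Writing `t = x / 2`, Taylor's bound `sin t ≥ t - t³/6` gives `x - 2 sin (x/2) ≤ x³/24`, while
Jordan's inequality `sin x ≥ 2x/π` gives `sin² x ≥ 4x²/π²`; on `[0, π/2]` the former is the smaller.
Summing, `‖Θ - 2 sin (Θ/2)‖_F ≤ ‖sin² Θ‖_F`, and the `ℓ²` norm of a nonnegative vector is at most its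
`ℓ¹` norm.
-/

open Real Finset

theorem Real.sqrt_sum_sq_le_sum_of_abs_le {ι : Type*} {s : Finset ι} {a b : ι → ℝ}
    (hab : ∀ i ∈ s, |a i| ≤ b i) : √(∑ i ∈ s, a i ^ 2) ≤ ∑ i ∈ s, b i := by
  have hb : ∀ i ∈ s, 0 ≤ b i := fun i hi ↦ (abs_nonneg _).trans (hab i hi)
  rw [Real.sqrt_le_left (sum_nonneg hb)]
  calc ∑ i ∈ s, a i ^ 2
      ≤ ∑ i ∈ s, b i ^ 2 := sum_le_sum fun i hi ↦ sq_le_sq.mpr <| by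
        rw [abs_of_nonneg (hb i hi)]; exact hab i hi
    _ ≤ (∑ i ∈ s, b i) ^ 2 := sum_sq_le_sq_sum_of_nonneg hb

namespace Real

theorem sub_two_mul_sin_half_nonneg {x : ℝ} (hx : 0 ≤ x) : 0 ≤ x - 2 * sin (x / 2) := by
  linarith [sin_le (by positivity : 0 ≤ x / 2)]

theorem sub_two_mul_sin_half_le_cube {x : ℝ} (hx : 0 ≤ x) : x - 2 * sin (x / 2) ≤ x ^ 3 / 24 := by
  linarith [sin_ge_sub_cube (by positivity : 0 ≤ x / 2)]

theorem sub_two_mul_sin_half_le_sin_sq {x : ℝ} (h0 : 0 ≤ x) (h1 : x ≤ π / 2) :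
    x - 2 * sin (x / 2) ≤ sin x ^ 2 := by
  have hjordan : (2 / π * x) ^ 2 ≤ sin x ^ 2 :=
    pow_le_pow_left₀ (by positivity) (mul_le_sin h0 h1) 2
  have hcube : x ^ 3 / 24 ≤ (2 / π * x) ^ 2 := by
    rw [div_mul_eq_mul_div, div_pow, le_div_iff₀ (by positivity)]
    have hπ : π ^ 3 ≤ 48 := by
      nlinarith [pow_le_pow_left₀ pi_pos.le pi_lt_d2.le 3]
    nlinarith [mul_le_mul_of_nonneg_left h1 (by positivity : 0 ≤ x ^ 2 * π ^ 2)]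
  linarith [sub_two_mul_sin_half_le_cube h0]

end Real

/-- For `Θ = diag(θ₁,…,θ_r)` with `θ_i ∈ [0, π/2]`:
`‖Θ − 2 sin(Θ/2)‖_F ≤ ‖sin Θ‖_F²`, i.e.
`√(Σ_i (θ_i − 2 sin(θ_i/2))²) ≤ Σ_i sin²(θ_i)`. -/
theorem diag_theta_minus_two_sin_half_le {r : ℕ} (θ : Fin r → ℝ)
    (hθ : ∀ i, θ i ∈ Set.Icc 0 (π / 2)) :
    Real.sqrt (∑ i, (θ i - 2 * Real.sin (θ i / 2)) ^ 2)
      ≤ ∑ i, Real.sin (θ i) ^ 2 := by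
  refine Real.sqrt_sum_sq_le_sum_of_abs_le fun i _ ↦ ?_
  obtain ⟨h0, h1⟩ := hθ i
  rw [abs_of_nonneg (sub_two_mul_sin_half_nonneg h0)]
  exact sub_two_mul_sin_half_le_sin_sq h0 h1
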